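/- arXiv:1801.04214 — 2 statements merged into one kernel-verified Lean document; each statement's English description precedes it below -/
import Mathlib

section
/- Let ρ ≥ 2 be an integer, let a ∈ ℤ be odd, and set m = a²·2^{2ρ} + 1. Let r ∈ ℤ₂ be a 2-adic integer with r² = m and r ≡ 1 (mod 2^{ρ+2}). Then the 2-adic valuation of (a·2^ρ + r)² − 1 in ℤ₂ is exactly ρ + 1. -/
/-!
Since `r² = a²·2^(2ρ) + 1`, the element `(a·2^ρ + r)² - 1` factors as `2^(ρ+1)·(a·r + a²·2^ρ)`.
Reducing modulo `2`, where `a ≡ r ≡ 1` and `2^ρ ≡ 0`, the second factor is `≡ 1`, hence a unit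
of `ℤ₂`, so the valuation is exactly `ρ + 1`.
-/

namespace PadicInt

variable {p : ℕ} [Fact p.Prime]

lemma valuation_eq_zero_of_isUnit {u : ℤ_[p]} (hu : IsUnit u) : u.valuation = 0 := by
  obtain ⟨v, rfl⟩ := hu
  have h := valuation_mul v.ne_zero v⁻¹.ne_zero
  rw [Units.mul_inv, valuation_one] at h
  omega

lemma valuation_p_pow_mul_of_isUnit (n : ℕ) {u : ℤ_[p]} (hu : IsUnit u) :
    ((p : ℤ_[p]) ^ n * u).valuation = n := by
  rw [valuation_p_pow_mul n u hu.ne_zero, valuation_eq_zero_of_isUnit hu, add_zero]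

lemma isUnit_iff_toZMod_ne_zero {x : ℤ_[p]} : IsUnit x ↔ toZMod x ≠ 0 := by
  rw [ne_eq, ← RingHom.mem_ker, ker_toZMod, IsLocalRing.mem_maximalIdeal, mem_nonunits_iff,
    not_not]

lemma toZMod_eq_of_dvd_sub {x y : ℤ_[p]} (h : (p : ℤ_[p]) ∣ x - y) : toZMod x = toZMod y := by
  obtain ⟨c, hc⟩ := h
  rw [← sub_eq_zero, ← map_sub, hc, map_mul, map_natCast, ZMod.natCast_self, zero_mul]

end PadicInt

lemma add_sq_sub_one_eq_two_pow_mul {R : Type*} [CommRing R] (a r : R) (ρ : ℕ)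
    (hr : r ^ 2 = a ^ 2 * 2 ^ (2 * ρ) + 1) :
    (a * 2 ^ ρ + r) ^ 2 - 1 = 2 ^ (ρ + 1) * (a * r + a ^ 2 * 2 ^ ρ) := by
  linear_combination hr

open PadicInt in
/-- For `ρ ≥ 2`, an odd integer `a`, `m = a²·2^(2ρ) + 1`, and a `2`-adic square root
`r` of `m` with `r ≡ 1 (mod 2^(ρ+2))`, the `2`-adic valuation of `(a·2^ρ + r)² - 1`
is exactly `ρ + 1`. -/
theorem valuation_of_fundamental_unit_square_two_adic
    (ρ : ℕ) (hρ : 2 ≤ ρ)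
    (a : ℤ) (ha : Odd a)
    (r : ℤ_[2])
    (hr : r ^ 2 = ((a ^ 2 * 2 ^ (2 * ρ) + 1 : ℤ) : ℤ_[2]))
    (hr1 : (2 : ℤ_[2]) ^ (ρ + 2) ∣ (r - 1)) :
    (((a : ℤ_[2]) * 2 ^ ρ + r) ^ 2 - 1).valuation = (ρ : ℤ) + 1 := by
  push_cast at hr
  have ha_mod : toZMod (a : ℤ_[2]) = 1 := by
    rw [map_intCast]
    exact ZMod.intCast_eq_one_iff_odd.mpr ha
  have hr_mod : toZMod r = 1 := by
    simpa using toZMod_eq_of_dvd_sub ((dvd_pow_self _ (by omega)).trans hr1)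
  have htwo_mod : toZMod (2 : ℤ_[2]) = 0 := by
    rw [map_ofNat]
    rfl
  have hunit : IsUnit ((a : ℤ_[2]) * r + a ^ 2 * 2 ^ ρ) := by
    rw [isUnit_iff_toZMod_ne_zero, map_add, map_mul, map_mul, map_pow, map_pow, ha_mod, hr_mod,
      htwo_mod, zero_pow (by omega)]
    decide
  rw [add_sq_sub_one_eq_two_pow_mul _ _ _ hr]
  exact_mod_cast valuation_p_pow_mul_of_isUnit (ρ + 1) hunit
end

section
/- Let m ≥ 2 be a squarefree integer with m ≡ 2, 3, 6 or 7 (mod 8) (so 2 ramifies in ℚ(√m)), and let u be a unit of the ring ℤ√m with u ≠ 1 and u ≠ −1. Then the norm N(u^4 − 1) is a nonzero integer and v_2(N(u^4 − 1)) = 4 + δ₀ + 2δ for some integer δ ≥ 0, where δ₀ = 1, 2, 3, 4 according as m ≡ 2, 3, 6, 7 (mod 8). -/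
/-!
Write `u = a + b√m` with `a² - m b² = ε = ±1`. Since `N(u² ∓ 1) = 2 ∓ 2(a² + m b²)` and
`(a² + m b²)² - (a² - m b²)² = 4 m a² b²`, we get `N(u⁴ - 1) = -16 m (ab)²`, so
`v₂(N(u⁴ - 1)) = 4 + v₂(m) + 2 v₂(ab)`. Here `v₂(m)` is `1` or `0` according as `m` is even or odd,
and reducing `a² - m b² = ±1` modulo `8` forces `2 ∣ ab` when `m ≡ 3, 6, 7 (mod 8)` and
`4 ∣ ab` when `m ≡ 7 (mod 8)`; this accounts for the remaining part of `δ₀`.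
-/

theorem padicValInt.pow {p : ℕ} [Fact p.Prime] (a : ℤ) (n : ℕ) :
    padicValInt p (a ^ n) = n * padicValInt p a := by
  simp only [padicValInt, Int.natAbs_pow, padicValNat.pow]

theorem padicValInt_two_eq_one_of_emod_four_eq_two {m : ℤ} (hm : m % 4 = 2) :
    padicValInt 2 m = 1 := by
  have h2 := (padicValInt_dvd_iff (p := 2) 1 m).mp (by norm_num; omega)
  have h4 := mt (padicValInt_dvd_iff (p := 2) 2 m).mpr (by norm_num; omega)
  omega

theorem padicValInt_two_neg_sixteen_mul_mul_sq {m c : ℤ} (hm : m ≠ 0) (hc : c ≠ 0) :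
    padicValInt 2 (-16 * m * c ^ 2) = 4 + padicValInt 2 m + 2 * padicValInt 2 c := by
  have h16 : padicValInt 2 (-16) = 4 := by
    change padicValNat 2 (2 ^ 4) = 4
    exact padicValNat.prime_pow 4
  rw [padicValInt.mul (mul_ne_zero (by norm_num) hm) (pow_ne_zero 2 hc),
    padicValInt.mul (by norm_num) hm, h16, padicValInt.pow]

namespace Zsqrtd

variable {d : ℤ} {x : ℤ√d}

theorem norm_eq_one_or_neg_one_of_isUnit (hx : IsUnit x) : x.norm = 1 ∨ x.norm = -1 :=
  Int.isUnit_iff.mp ((isUnit_iff_norm_isUnit x).mp hx)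

theorem norm_pow_four_sub_one_of_isUnit (hx : IsUnit x) :
    (x ^ 4 - 1).norm = -16 * d * (x.re * x.im) ^ 2 := by
  have hn : x.norm ^ 2 = 1 := by
    rcases norm_eq_one_or_neg_one_of_isUnit hx with h | h <;> simp [h]
  rw [norm_def] at hn
  rw [show x ^ 4 = x * x * (x * x) by ring]
  simp only [norm_def, re_sub, im_sub, re_mul, im_mul, re_one, im_one]
  linear_combination ((x.re * x.re - d * x.im * x.im) ^ 2 - 1) * hn

theorem re_ne_zero_of_isUnit (hd : ¬IsUnit d) (hx : IsUnit x) : x.re ≠ 0 := by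
  intro hre
  apply hd
  rcases norm_eq_one_or_neg_one_of_isUnit hx with h | h <;> rw [norm_def, hre] at h
  · exact isUnit_of_dvd_one ⟨-(x.im * x.im), by linarith⟩
  · exact isUnit_of_dvd_one ⟨x.im * x.im, by linarith⟩

theorem im_ne_zero_of_isUnit (hx : IsUnit x) (h1 : x ≠ 1) (hneg1 : x ≠ -1) : x.im ≠ 0 := by
  intro him
  have hre : x.re * x.re = 1 := by
    rcases norm_eq_one_or_neg_one_of_isUnit hx with h | h <;> rw [norm_def, him] at h
    · linarith
    · nlinarith [mul_self_nonneg x.re]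
  rcases mul_self_eq_one_iff.mp hre with h | h
  · exact h1 (Zsqrtd.ext (by simp [h]) (by simp [him]))
  · exact hneg1 (Zsqrtd.ext (by simp [h]) (by simp [him]))

theorem norm_zmod_eq_one_or_neg_one_of_isUnit (n : ℕ) (hx : IsUnit x) :
    (x.re : ZMod n) ^ 2 - d * (x.im : ZMod n) ^ 2 = 1 ∨
      (x.re : ZMod n) ^ 2 - d * (x.im : ZMod n) ^ 2 = -1 := by
  rcases norm_eq_one_or_neg_one_of_isUnit hx with h | h <;>
    have h' := congrArg (Int.cast : ℤ → ZMod n) h <;>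
    push_cast [norm_def] at h'
  · exact Or.inl (by linear_combination h')
  · exact Or.inr (by linear_combination h')

theorem two_dvd_re_mul_im_of_isUnit (hd : d % 8 = 3 ∨ d % 8 = 6 ∨ d % 8 = 7)
    (hx : IsUnit x) : 2 ∣ x.re * x.im := by
  -- `2 ∣ n ↔ 8 ∣ 4n`, which turns the claim into a finite check on residues mod `8`
  have key : ∀ a b c : ZMod 8, (c = 3 ∨ c = 6 ∨ c = 7) →
      (a ^ 2 - c * b ^ 2 = 1 ∨ a ^ 2 - c * b ^ 2 = -1) → 4 * (a * b) = 0 := by decide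
  have h8 : ((4 * (x.re * x.im) : ℤ) : ZMod 8) = 0 := by
    push_cast
    refine key _ _ _ ?_ (norm_zmod_eq_one_or_neg_one_of_isUnit 8 hx)
    rw [← ZMod.intCast_mod]
    rcases hd with h | h | h <;> simp [h]
  rw [ZMod.intCast_zmod_eq_zero_iff_dvd] at h8
  omega

theorem four_dvd_re_mul_im_of_isUnit (hd : d % 8 = 7) (hx : IsUnit x) :
    4 ∣ x.re * x.im := by
  have key : ∀ a b : ZMod 8, (a ^ 2 - 7 * b ^ 2 = 1 ∨ a ^ 2 - 7 * b ^ 2 = -1) →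
      2 * (a * b) = 0 := by decide
  have h8 : ((2 * (x.re * x.im) : ℤ) : ZMod 8) = 0 := by
    push_cast
    have hd8 : (d : ZMod 8) = 7 := by rw [← ZMod.intCast_mod, Nat.cast_ofNat, hd]; rfl
    exact key _ _ (hd8 ▸ norm_zmod_eq_one_or_neg_one_of_isUnit 8 hx)
  rw [ZMod.intCast_zmod_eq_zero_iff_dvd] at h8
  omega

end Zsqrtd

theorem padicValInt_norm_of_two_ramified_general
    (m : ℤ) (hm : 2 ≤ m)
    (hm8 : m % 8 = 2 ∨ m % 8 = 3 ∨ m % 8 = 6 ∨ m % 8 = 7)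
    (u : (ℤ√m)ˣ) (hu1 : (u : ℤ√m) ≠ 1) (hu2 : (u : ℤ√m) ≠ -1) :
    Zsqrtd.norm ((u : ℤ√m) ^ 4 - 1) ≠ 0 ∧
      ∃ δ : ℕ, padicValInt 2 (Zsqrtd.norm ((u : ℤ√m) ^ 4 - 1)) =
        4 + (if m % 8 = 2 then 1 else if m % 8 = 3 then 2 else
             if m % 8 = 6 then 3 else 4) + 2 * δ := by
  set x : ℤ√m := ↑u
  have hx : IsUnit x := u.isUnit
  have hm0 : m ≠ 0 := by omega
  have hc : x.re * x.im ≠ 0 :=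
    mul_ne_zero (Zsqrtd.re_ne_zero_of_isUnit (by rw [Int.isUnit_iff]; omega) hx)
      (Zsqrtd.im_ne_zero_of_isUnit hx hu1 hu2)
  rw [Zsqrtd.norm_pow_four_sub_one_of_isUnit hx]
  refine ⟨mul_ne_zero (mul_ne_zero (by norm_num) hm0) (pow_ne_zero 2 hc), ?_⟩
  rw [padicValInt_two_neg_sixteen_mul_mul_sq hm0 hc]
  have hv : ∀ k : ℕ, (2 : ℤ) ^ k ∣ x.re * x.im → k ≤ padicValInt 2 (x.re * x.im) :=
    fun k hk ↦ ((padicValInt_dvd_iff k _).mp (by exact_mod_cast hk)).resolve_left hc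
  have hodd : m % 2 = 1 → padicValInt 2 m = 0 := fun h ↦
    padicValInt.eq_zero_of_not_dvd (by omega)
  rcases hm8 with h | h | h | h
  · refine ⟨padicValInt 2 (x.re * x.im), ?_⟩
    norm_num [h, padicValInt_two_eq_one_of_emod_four_eq_two (by omega : m % 4 = 2)]
  · have hab := hv 1 (by simpa using Zsqrtd.two_dvd_re_mul_im_of_isUnit (by omega) hx)
    refine ⟨padicValInt 2 (x.re * x.im) - 1, ?_⟩
    norm_num [h, hodd (by omega)]
    omega
  · have hab := hv 1 (by simpa using Zsqrtd.two_dvd_re_mul_im_of_isUnit (by omega) hx)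
    refine ⟨padicValInt 2 (x.re * x.im) - 1, ?_⟩
    norm_num [h, padicValInt_two_eq_one_of_emod_four_eq_two (by omega : m % 4 = 2)]
    omega
  · have hab := hv 2 (by simpa using Zsqrtd.four_dvd_re_mul_im_of_isUnit h hx)
    refine ⟨padicValInt 2 (x.re * x.im) - 2, ?_⟩
    norm_num [h, hodd (by omega)]
    omega

/-- If `m ≥ 2` is squarefree with `m ≡ 2, 3, 6, 7 (mod 8)` (so `2` ramifies) and `u`
is a unit of `ℤ√m` with `u ≠ ±1`, then `N(u^4 - 1)` is nonzero and its `2`-adic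
valuation equals `4 + δ₀ + 2δ` with `δ₀ = 1, 2, 3, 4` according as
`m ≡ 2, 3, 6, 7 (mod 8)`. -/
theorem padicValInt_norm_of_two_ramified
    (m : ℤ) (hm : 2 ≤ m) (hmsf : Squarefree m)
    (hm8 : m % 8 = 2 ∨ m % 8 = 3 ∨ m % 8 = 6 ∨ m % 8 = 7)
    (u : (ℤ√m)ˣ) (hu1 : (u : ℤ√m) ≠ 1) (hu2 : (u : ℤ√m) ≠ -1) :
    Zsqrtd.norm ((u : ℤ√m) ^ 4 - 1) ≠ 0 ∧
      ∃ δ : ℕ, padicValInt 2 (Zsqrtd.norm ((u : ℤ√m) ^ 4 - 1)) =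
        4 + (if m % 8 = 2 then 1 else if m % 8 = 3 then 2 else
             if m % 8 = 6 then 3 else 4) + 2 * δ :=
  padicValInt_norm_of_two_ramified_general m hm hm8 u hu1 hu2
end
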